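/- Let G=(V,E) be a finite simple graph with a graph tensor network in Vidal form satisfying the local orthogonality condition at every directed edge. Define vertex tensors T_a[i,(j_{ba})_{b∈∂a}] = Γ_a[i,(j_{ba})_{b∈∂a}]·Π_{b∈∂a} λ_ba[j_ba]^{1/2}, and for each directed edge a→b define the diagonal message m_{a→b}[j,j'] = δ_{j,j'}·λ_ab[j]. Then these messages are an exact fixed point of the belief-propagation update: for every directed edge a→b and all j,j'∈{0,…,d_ab−1}, Σ T_a[i_a,(j_{ca})_{c∈∂a}]·T_a*[i_a,(j'_{ca})_{c∈∂a}]·Π_{c∈∂a\{b}} m_{c→a}[j_{ca}, j'_{ca}] = m_{a→b}[j,j'], where the sum runs over i_a∈{0,1} and over all unprimed and primed bond-index values on the edges {c,a} with c∈∂a\{b}, and where the bond index of edge {a,b} is fixed to j (unprimed) and j' (primed). Consequently, the unit-trace normalized messages m_{a→b}[j,j'] = δ_{j,j'}·λ_ab[j]/Σ_k λ_ab[k] satisfy the belief-propagation update equation up to a positive constant factor. -/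

import Mathlib

/-!
Against diagonal messages `δ_{k,k'}·λ[k]`, the sum over the primed index of every side edge
collapses onto the unprimed one, and the factors `√λ` contributed by `T_a` and by `T_a*`
combine with the message `λ` into `λ²`. What is left is `√λ_ab[j]·√λ_ab[j']` times the
left-hand side of local orthogonality at `a → b`, i.e. `δ_{j,j'}·λ_ab[j]`. Dividing each
incoming message by its trace rescales the update by the positive product of the inverse traces.
-/

open scoped BigOperators

variable {V : Type*} [Fintype V] [DecidableEq V]

/-- A graph tensor network in Vidal form on a finite simple graph `G`: a bond dimension
`d e ≥ 1` and a nonnegative vector `lam e` (the entries `lam e k` for `k < d e` being the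
relevant ones) for each edge `e`, and for each vertex `a` a tensor `Γ a` taking a physical
index in `Fin 2` and a bond index for each edge incident to `a`. -/
structure VidalNet (G : SimpleGraph V) [DecidableRel G.Adj] where
  d : G.edgeSet → ℕ
  d_pos : ∀ e, 0 < d e
  lam : G.edgeSet → ℕ → ℝ
  lam_nonneg : ∀ e k, 0 ≤ lam e k
  Γ : ∀ a : V, Fin 2 → ({e : G.edgeSet // a ∈ (e : Sym2 V)} → ℕ) → ℂ

/-- `branchV G a b` is the vertex set `V_{b→a}` of the connected component of `b` in the
graph `G` with the edge `{a,b}` removed. -/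
def branchV (G : SimpleGraph V) (a b : V) : Set V :=
  {c | (G.deleteEdges {s(a, b)}).Reachable b c}

/-- `branchE G a b` is the edge set `E_{b→a}` of the connected component of `b` in the
graph `G` with the edge `{a,b}` removed. -/
def branchE (G : SimpleGraph V) [DecidableRel G.Adj] (a b : V) : Set G.edgeSet :=
  {e | (e : Sym2 V) ≠ s(a, b) ∧ ∀ x ∈ (e : Sym2 V), x ∈ branchV G a b}

namespace VidalNet

variable {G : SimpleGraph V} [DecidableRel G.Adj]

/-- The state represented by a graph tensor network in Vidal form:
`Ψ[(i_a)] = Σ_j (Π_{a∈V} Γ_a[i_a,(j_{ab})_{b∈∂a}])·(Π_{e∈E} λ_e[j_e])`. -/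
noncomputable def psi (net : VidalNet G) (i : V → Fin 2) : ℂ :=
  ∑ j ∈ Fintype.piFinset (fun e : G.edgeSet => Finset.range (net.d e)),
    (∏ a : V, net.Γ a (i a) (fun e => j e.1)) * ∏ e : G.edgeSet, (net.lam e (j e) : ℂ)

open scoped Classical in
/-- The Schmidt vector `u_{a→b}(j)` of the subtree `V_{a→b}` of `a` (the connected component
of `a` in the graph with the edge `{a,b}` removed). -/
noncomputable def schmidt (net : VidalNet G) (a b : V) (j : ℕ) :
    ({c : V // c ∈ branchV G b a} → Fin 2) → ℂ := fun i =>
  ∑ k ∈ Fintype.piFinset (fun e : {e : G.edgeSet // e ∈ branchE G b a} =>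
      Finset.range (net.d e.1)),
    (∏ c : {c : V // c ∈ branchV G b a},
        net.Γ c.1 (i c)
          (fun e => if (e.1 : Sym2 V) = s(a, b) then j
            else if h : e.1 ∈ branchE G b a then k ⟨e.1, h⟩ else 0)) *
      ∏ e : {e : G.edgeSet // e ∈ branchE G b a}, (net.lam e.1 (k e) : ℂ)

open scoped Classical in
/-- The Gram matrix `G_{a→b}[j,j'] = ⟨u_{a→b}(j'), u_{a→b}(j)⟩` of the Schmidt vectors,
conjugate-linear in the first argument. -/
noncomputable def gram (net : VidalNet G) (a b : V) (j j' : ℕ) : ℂ :=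
  ∑ i : ({c : V // c ∈ branchV G b a} → Fin 2),
    (starRingEnd ℂ) (net.schmidt a b j' i) * net.schmidt a b j i

/-- The local orthogonality condition at the directed edge `a → b`. -/
def LocalOrtho (net : VidalNet G) {a b : V} (hab : G.Adj a b) : Prop :=
  ∀ j j' : ℕ, j < net.d ⟨s(a, b), (SimpleGraph.mem_edgeSet G).mpr hab⟩ →
    j' < net.d ⟨s(a, b), (SimpleGraph.mem_edgeSet G).mpr hab⟩ →
    (if j = j' then (1 : ℂ) else 0) =
      ∑ ia : Fin 2,
        ∑ g ∈ Fintype.piFinset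
            (fun e : {e : {e : G.edgeSet // a ∈ (e : Sym2 V)} // (e.1 : Sym2 V) ≠ s(a, b)} =>
              Finset.range (net.d e.1.1)),
          net.Γ a ia (fun e => if h : (e.1 : Sym2 V) = s(a, b) then j else g ⟨e, h⟩) *
            (starRingEnd ℂ)
              (net.Γ a ia (fun e => if h : (e.1 : Sym2 V) = s(a, b) then j' else g ⟨e, h⟩)) *
            ∏ e : {e : {e : G.edgeSet // a ∈ (e : Sym2 V)} // (e.1 : Sym2 V) ≠ s(a, b)},
              ((net.lam e.1.1 (g e) : ℂ)) ^ 2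

end VidalNet

section BPFixedPoint

variable {V : Type*} [Fintype V] [DecidableEq V] {G : SimpleGraph V} [DecidableRel G.Adj]

/-- The edges incident to the vertex `a` other than the (unordered) pair `p`. -/
abbrev SideEdges (G : SimpleGraph V) [DecidableRel G.Adj] (a : V) (p : Sym2 V) :=
  {e : {e : G.edgeSet // a ∈ (e : Sym2 V)} // (e.1 : Sym2 V) ≠ p}

/-- The vertex tensors `T_a[i,(j_ba)] = Γ_a[i,(j_ba)]·Π_{b∈∂a} λ_ba[j_ba]^{1/2}` obtained by
splitting the Schmidt coefficients symmetrically among the neighboring tensors. -/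
noncomputable def VidalNet.symTensor (net : VidalNet G) (a : V) :
    Fin 2 → ({e : G.edgeSet // a ∈ (e : Sym2 V)} → ℕ) → ℂ := fun ia J =>
  net.Γ a ia J *
    ∏ e : {e : G.edgeSet // a ∈ (e : Sym2 V)}, (Real.sqrt (net.lam e.1 (J e)) : ℂ)

theorem sum_piFinset_mul_prod_ite_eq {ι κ R : Type*} [Fintype ι] [DecidableEq ι] [DecidableEq κ]
    [CommSemiring R] (s : ι → Finset κ) (f : (ι → κ) → R) (w : ι → κ → R) {g : ι → κ}
    (hg : g ∈ Fintype.piFinset s) :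
    ∑ g' ∈ Fintype.piFinset s, f g' * ∏ i, (if g i = g' i then w i (g i) else 0) =
      f g * ∏ i, w i (g i) := by
  rw [Finset.sum_eq_single_of_mem g hg]
  · simp
  · intro g' _ hne
    obtain ⟨i, hi⟩ : ∃ i, g i ≠ g' i := by
      by_contra! h
      exact hne (funext h).symm
    rw [Finset.prod_eq_zero (Finset.mem_univ i) (if_neg hi), mul_zero]

theorem prod_incident_eq_mul_prod_sideEdges {M : Type*} [CommMonoid M] {a b : V}
    (hab : G.Adj a b) (f : {e : G.edgeSet // a ∈ (e : Sym2 V)} → M) :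
    ∏ e, f e = f ⟨⟨s(a, b), (SimpleGraph.mem_edgeSet G).mpr hab⟩, Sym2.mem_mk_left a b⟩ *
      ∏ e : SideEdges G a s(a, b), f e.1 := by
  rw [Fintype.prod_eq_mul_prod_subtype_ne f]
  congr 1
  refine Fintype.prod_equiv (Equiv.subtypeEquivRight fun e => ?_) _ _ fun _ => rfl
  simp [Subtype.ext_iff]

namespace VidalNet

def bondIdx {a : V} {p : Sym2 V} (j : ℕ) (g : SideEdges G a p → ℕ) :
    {e : G.edgeSet // a ∈ (e : Sym2 V)} → ℕ :=
  fun e => if h : (e.1 : Sym2 V) = p then j else g ⟨e, h⟩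

omit [Fintype V] in
@[simp]
theorem bondIdx_edge {a : V} {p : Sym2 V} (j : ℕ) (g : SideEdges G a p → ℕ) (hp : p ∈ G.edgeSet)
    (ha : a ∈ p) : bondIdx j g ⟨⟨p, hp⟩, ha⟩ = j :=
  dif_pos rfl

omit [Fintype V] in
@[simp]
theorem bondIdx_sideEdge {a : V} {p : Sym2 V} (j : ℕ) (g : SideEdges G a p → ℕ)
    (e : SideEdges G a p) : bondIdx j g e.1 = g e :=
  dif_neg e.2

noncomputable def bpUpdate (net : VidalNet G) (a : V) (p : Sym2 V)
    (m : SideEdges G a p → ℕ → ℕ → ℂ) (j j' : ℕ) : ℂ :=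
  ∑ ia : Fin 2,
    ∑ g ∈ Fintype.piFinset (fun e : SideEdges G a p => Finset.range (net.d e.1.1)),
      ∑ g' ∈ Fintype.piFinset (fun e : SideEdges G a p => Finset.range (net.d e.1.1)),
        net.symTensor a ia (bondIdx j g) * starRingEnd ℂ (net.symTensor a ia (bondIdx j' g')) *
          ∏ e, m e (g e) (g' e)

def diagMsg {a : V} {p : Sym2 V} (w : SideEdges G a p → ℕ → ℝ) :
    SideEdges G a p → ℕ → ℕ → ℂ :=
  fun e k k' => if k = k' then (w e k : ℂ) else 0

theorem bpUpdate_diagMsg (net : VidalNet G) (a : V) (p : Sym2 V) (w : SideEdges G a p → ℕ → ℝ)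
    (j j' : ℕ) :
    net.bpUpdate a p (diagMsg w) j j' =
      ∑ ia : Fin 2,
        ∑ g ∈ Fintype.piFinset (fun e : SideEdges G a p => Finset.range (net.d e.1.1)),
          net.symTensor a ia (bondIdx j g) * starRingEnd ℂ (net.symTensor a ia (bondIdx j' g)) *
            ∏ e, (w e (g e) : ℂ) := by
  unfold bpUpdate
  refine Finset.sum_congr rfl fun _ _ => Finset.sum_congr rfl fun _ hg => ?_
  exact sum_piFinset_mul_prod_ite_eq _ _ (fun e k => (w e k : ℂ)) hg

theorem bpUpdate_diagMsg_div (net : VidalNet G) (a : V) (p : Sym2 V)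
    (w : SideEdges G a p → ℕ → ℝ) (c : SideEdges G a p → ℝ) (j j' : ℕ) :
    net.bpUpdate a p (diagMsg fun e k => w e k / c e) j j' =
      ((∏ e, c e)⁻¹ : ℝ) * net.bpUpdate a p (diagMsg w) j j' := by
  simp only [bpUpdate_diagMsg, Finset.mul_sum]
  refine Finset.sum_congr rfl fun _ _ => Finset.sum_congr rfl fun _ _ => ?_
  push_cast
  simp only [div_eq_mul_inv, Finset.prod_mul_distrib, Finset.prod_inv_distrib]
  ring

-- On each side edge the factor `√λ` of `T_a` and that of `T_a*` recombine to `λ`.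
theorem symTensor_bondIdx_mul_conj (net : VidalNet G) {a b : V} (hab : G.Adj a b) (ia : Fin 2)
    (j j' : ℕ) (g : SideEdges G a s(a, b) → ℕ) :
    net.symTensor a ia (bondIdx j g) * starRingEnd ℂ (net.symTensor a ia (bondIdx j' g)) =
      ((√(net.lam ⟨s(a, b), (SimpleGraph.mem_edgeSet G).mpr hab⟩ j) *
          √(net.lam ⟨s(a, b), (SimpleGraph.mem_edgeSet G).mpr hab⟩ j') : ℝ) : ℂ) *
        (∏ e : SideEdges G a s(a, b), (net.lam e.1.1 (g e) : ℂ)) *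
        (net.Γ a ia (bondIdx j g) * starRingEnd ℂ (net.Γ a ia (bondIdx j' g))) := by
  have hsqrt : (∏ e : SideEdges G a s(a, b), (√(net.lam e.1.1 (g e)) : ℂ)) *
      ∏ e : SideEdges G a s(a, b), (√(net.lam e.1.1 (g e)) : ℂ) =
        ∏ e : SideEdges G a s(a, b), (net.lam e.1.1 (g e) : ℂ) := by
    rw [← Finset.prod_mul_distrib]
    refine Finset.prod_congr rfl fun e _ => ?_
    rw [← Complex.ofReal_mul, Real.mul_self_sqrt (net.lam_nonneg _ _)]
  unfold symTensor
  rw [prod_incident_eq_mul_prod_sideEdges hab, prod_incident_eq_mul_prod_sideEdges hab]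
  simp only [bondIdx_edge, bondIdx_sideEdge, map_mul, map_prod, Complex.conj_ofReal]
  rw [← hsqrt]
  push_cast
  ring

theorem LocalOrtho.sum_bondIdx {net : VidalNet G} {a b : V} {hab : G.Adj a b}
    (hortho : net.LocalOrtho hab) {j j' : ℕ}
    (hj : j < net.d ⟨s(a, b), (SimpleGraph.mem_edgeSet G).mpr hab⟩)
    (hj' : j' < net.d ⟨s(a, b), (SimpleGraph.mem_edgeSet G).mpr hab⟩) :
    ∑ ia : Fin 2,
      ∑ g ∈ Fintype.piFinset (fun e : SideEdges G a s(a, b) => Finset.range (net.d e.1.1)),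
        net.Γ a ia (bondIdx j g) * starRingEnd ℂ (net.Γ a ia (bondIdx j' g)) *
          ∏ e : SideEdges G a s(a, b), (net.lam e.1.1 (g e) : ℂ) ^ 2 =
      if j = j' then 1 else 0 :=
  (hortho j j' hj hj').symm

theorem bpUpdate_diagMsg_lam (net : VidalNet G) {a b : V} (hab : G.Adj a b)
    (hortho : net.LocalOrtho hab) {j j' : ℕ}
    (hj : j < net.d ⟨s(a, b), (SimpleGraph.mem_edgeSet G).mpr hab⟩)
    (hj' : j' < net.d ⟨s(a, b), (SimpleGraph.mem_edgeSet G).mpr hab⟩) :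
    net.bpUpdate a s(a, b) (diagMsg fun e => net.lam e.1.1) j j' =
      if j = j' then (net.lam ⟨s(a, b), (SimpleGraph.mem_edgeSet G).mpr hab⟩ j : ℂ) else 0 := by
  have hterm : ∀ ia g,
      net.symTensor a ia (bondIdx j g) * starRingEnd ℂ (net.symTensor a ia (bondIdx j' g)) *
          ∏ e : SideEdges G a s(a, b), (net.lam e.1.1 (g e) : ℂ) =
        ((√(net.lam ⟨s(a, b), (SimpleGraph.mem_edgeSet G).mpr hab⟩ j) *
            √(net.lam ⟨s(a, b), (SimpleGraph.mem_edgeSet G).mpr hab⟩ j') : ℝ) : ℂ) *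
          (net.Γ a ia (bondIdx j g) * starRingEnd ℂ (net.Γ a ia (bondIdx j' g)) *
            ∏ e : SideEdges G a s(a, b), (net.lam e.1.1 (g e) : ℂ) ^ 2) := by
    intro ia g
    rw [symTensor_bondIdx_mul_conj net hab, Finset.prod_pow]
    ring
  simp only [bpUpdate_diagMsg, hterm, ← Finset.mul_sum]
  rw [hortho.sum_bondIdx hj hj']
  split_ifs with h
  · subst h
    rw [Real.mul_self_sqrt (net.lam_nonneg _ _), mul_one]
  · rw [mul_zero]

end VidalNet

/-- For a graph tensor network in Vidal form satisfying the local
orthogonality condition at every directed edge, the diagonal messages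
`m_{a→b}[j,j'] = δ_{j,j'}·λ_ab[j]` are an exact fixed point of the belief-propagation update
for the vertex tensors `T_a = Γ_a·Πλ^{1/2}`; consequently, the unit-trace normalized messages
`δ_{j,j'}·λ_ab[j]/Σ_k λ_ab[k]` satisfy the belief-propagation update equation up to a positive
constant factor. -/
theorem vidal_gauge_messages_are_bp_fixed_point
    (net : VidalNet G) (hortho : ∀ a b : V, ∀ hab : G.Adj a b, net.LocalOrtho hab) :
    (∀ a b : V, ∀ hab : G.Adj a b, ∀ j j' : ℕ,
      j < net.d ⟨s(a, b), (SimpleGraph.mem_edgeSet G).mpr hab⟩ →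
      j' < net.d ⟨s(a, b), (SimpleGraph.mem_edgeSet G).mpr hab⟩ →
      ∑ ia : Fin 2,
        ∑ g ∈ Fintype.piFinset
            (fun e : SideEdges G a s(a, b) => Finset.range (net.d e.1.1)),
          ∑ g' ∈ Fintype.piFinset
              (fun e : SideEdges G a s(a, b) => Finset.range (net.d e.1.1)),
            net.symTensor a ia
                (fun e => if h : (e.1 : Sym2 V) = s(a, b) then j else g ⟨e, h⟩) *
              (starRingEnd ℂ)
                (net.symTensor a ia
                  (fun e => if h : (e.1 : Sym2 V) = s(a, b) then j' else g' ⟨e, h⟩)) *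
              ∏ e : SideEdges G a s(a, b),
                (if g e = g' e then (net.lam e.1.1 (g e) : ℂ) else 0)
        = if j = j' then (net.lam ⟨s(a, b), (SimpleGraph.mem_edgeSet G).mpr hab⟩ j : ℂ)
          else 0) ∧
    ((∀ e : G.edgeSet, 0 < ∑ k ∈ Finset.range (net.d e), net.lam e k) →
      ∀ a b : V, ∀ hab : G.Adj a b, ∃ cst : ℝ, 0 < cst ∧
        ∀ j j' : ℕ,
          j < net.d ⟨s(a, b), (SimpleGraph.mem_edgeSet G).mpr hab⟩ →
          j' < net.d ⟨s(a, b), (SimpleGraph.mem_edgeSet G).mpr hab⟩ →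
          ∑ ia : Fin 2,
            ∑ g ∈ Fintype.piFinset
                (fun e : SideEdges G a s(a, b) => Finset.range (net.d e.1.1)),
              ∑ g' ∈ Fintype.piFinset
                  (fun e : SideEdges G a s(a, b) => Finset.range (net.d e.1.1)),
                net.symTensor a ia
                    (fun e => if h : (e.1 : Sym2 V) = s(a, b) then j else g ⟨e, h⟩) *
                  (starRingEnd ℂ)
                    (net.symTensor a ia
                      (fun e => if h : (e.1 : Sym2 V) = s(a, b) then j' else g' ⟨e, h⟩)) *
                  ∏ e : SideEdges G a s(a, b),
                    (if g e = g' e then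
                      ((net.lam e.1.1 (g e) /
                        ∑ k ∈ Finset.range (net.d e.1.1), net.lam e.1.1 k : ℝ) : ℂ)
                    else 0)
            = (cst : ℂ) *
                (if j = j' then
                  ((net.lam ⟨s(a, b), (SimpleGraph.mem_edgeSet G).mpr hab⟩ j /
                    ∑ k ∈ Finset.range (net.d ⟨s(a, b), (SimpleGraph.mem_edgeSet G).mpr hab⟩),
                      net.lam ⟨s(a, b), (SimpleGraph.mem_edgeSet G).mpr hab⟩ k : ℝ) : ℂ)
                else 0)) := by
  have hfixed := fun a b hab j j' hj hj' =>
    net.bpUpdate_diagMsg_lam (j := j) (j' := j') hab (hortho a b hab) hj hj'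
  refine ⟨hfixed, fun hS a b hab => ?_⟩
  have hSab := (hS ⟨s(a, b), (SimpleGraph.mem_edgeSet G).mpr hab⟩).ne'
  refine ⟨(∑ k ∈ Finset.range (net.d ⟨s(a, b), (SimpleGraph.mem_edgeSet G).mpr hab⟩),
      net.lam ⟨s(a, b), (SimpleGraph.mem_edgeSet G).mpr hab⟩ k) *
      (∏ e : SideEdges G a s(a, b), ∑ k ∈ Finset.range (net.d e.1.1), net.lam e.1.1 k)⁻¹,
    mul_pos (hS _) (inv_pos.mpr (Finset.prod_pos fun e _ => hS e.1.1)), fun j j' hj hj' => ?_⟩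
  refine (net.bpUpdate_diagMsg_div a s(a, b) (fun e => net.lam e.1.1)
    (fun e => ∑ k ∈ Finset.range (net.d e.1.1), net.lam e.1.1 k) j j').trans ?_
  rw [hfixed a b hab j j' hj hj']
  split_ifs
  · rw [← Complex.ofReal_mul, ← Complex.ofReal_mul]
    congr 1
    field_simp
  · simp

end BPFixedPoint
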